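/- arXiv:1601.04088 — 5 statements merged into one kernel-verified Lean document; each statement's English description precedes it below -/
import Mathlib

section
/- If f is a Lebesgue integrable non-negative real-valued function on (0,1) and ε > 0, then the integral over (0,1)^∞ (with respect to the infinite product of Lebesgue measure) of the function (x_i)_{i∈ℕ} ↦ ( (1/N) Σ_{k=1}^N ( f(x_k)·χ_{{x : f(x) < kε}}(x_k) − ∫_{{x : f(x) < kε}} f(x) dx ) )² is at most 2ε ∫_0^1 f(x) dx, for every N ∈ ℕ. -/
/-!
Write `g k` for the truncation `f · 𝟙{f < kε}`. The summands `g k (X k) - 𝔼 g k (X k)` are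
independent and centred, so the integral is `N⁻² ∑ Var (g k (X k)) ≤ N⁻² ∑ 𝔼 (g k (X k))²`.
Since `0 ≤ g k < kε`, we have `(g k)² ≤ kε f`, so each second moment is at most
`kε ∫ f ≤ Nε ∫ f`, and the whole expression is at most `ε ∫ f`.
-/

open MeasureTheory ProbabilityTheory

theorem integral_sq_sum_comp_sub_integral_le {Ω E ι : Type*} [MeasurableSpace Ω]
    [MeasurableSpace E] {P : Measure Ω} [IsProbabilityMeasure P] {μ : Measure E}
    {X : ι → Ω → E} (hX : ∀ i, AEMeasurable (X i) P) (hindep : iIndepFun X P)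
    (hlaw : ∀ i, P.map (X i) = μ) {g : ι → E → ℝ} (hg : ∀ i, MemLp (g i) 2 μ) (s : Finset ι) :
    ∫ ω, (∑ i ∈ s, (g i (X i ω) - ∫ x, g i x ∂μ)) ^ 2 ∂P ≤ ∑ i ∈ s, ∫ x, g i x ^ 2 ∂μ := by
  have hg' : ∀ i, MemLp (g i) 2 (P.map (X i)) := fun i => hlaw i ▸ hg i
  have hY : ∀ i, MemLp (g i ∘ X i) 2 P := fun i => (hg' i).comp_of_map (hX i)
  have hmean : ∀ i, ∫ x, g i x ∂μ = ∫ ω, g i (X i ω) ∂P := fun i => by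
    rw [← hlaw i, integral_map (hX i) (hg' i).aestronglyMeasurable]
  have hsq : ∀ i, ∫ x, g i x ^ 2 ∂μ = ∫ ω, g i (X i ω) ^ 2 ∂P := fun i => by
    rw [← hlaw i]
    exact integral_map (hX i) ((hg' i).aestronglyMeasurable.pow 2)
  have hpair : Set.Pairwise ↑s fun i j => IndepFun (g i ∘ X i) (g j ∘ X j) P :=
    fun _ _ _ _ hij =>
      (hindep.comp₀ g hX fun i => (hg' i).aestronglyMeasurable.aemeasurable).indepFun hij
  calc ∫ ω, (∑ i ∈ s, (g i (X i ω) - ∫ x, g i x ∂μ)) ^ 2 ∂P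
      = Var[∑ i ∈ s, g i ∘ X i; P] := by
        rw [variance_eq_integral (memLp_finsetSum' s fun i _ => hY i).aemeasurable]
        simp only [Finset.sum_apply, Function.comp_apply, hmean, Finset.sum_sub_distrib]
        rw [integral_finsetSum (f := fun i ω => g i (X i ω)) s
          fun i _ => (hY i).integrable one_le_two]
    _ = ∑ i ∈ s, Var[g i ∘ X i; P] := IndepFun.variance_sum (fun i _ => hY i) hpair
    _ ≤ ∑ i ∈ s, ∫ x, g i x ^ 2 ∂μ := Finset.sum_le_sum fun i _ => by
        simpa [hsq] using variance_le_expectation_sq (hY i).aestronglyMeasurable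

section Truncation

variable {α : Type*} {f : α → ℝ} {c : ℝ}

theorem sq_indicator_setOf_lt_le_mul (hc : 0 ≤ c) {x : α} (hx : 0 ≤ f x) :
    ({y | f y < c}.indicator f x) ^ 2 ≤ c * f x := by
  by_cases h : f x < c
  · rw [Set.indicator_of_mem (show x ∈ {y | f y < c} from h), sq]
    exact mul_le_mul_of_nonneg_right h.le hx
  · rw [Set.indicator_of_notMem (show x ∉ {y | f y < c} from h), zero_pow two_ne_zero]
    exact mul_nonneg hc hx

variable [MeasurableSpace α] {μ : Measure α}

theorem setIntegral_indicator₀ {s t : Set α} (ht : NullMeasurableSet t (μ.restrict s)) :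
    ∫ x in s, t.indicator f x ∂μ = ∫ x in s ∩ t, f x ∂μ := by
  rw [integral_indicator₀ ht, Measure.restrict_restrict₀ ht, Set.inter_comm]

theorem MeasureTheory.AEStronglyMeasurable.indicator_setOf_lt
    (hf : AEStronglyMeasurable f μ) (c : ℝ) :
    AEStronglyMeasurable ({x | f x < c}.indicator f) μ :=
  hf.indicator₀ (hf.nullMeasurableSet_lt aestronglyMeasurable_const)

theorem memLp_two_indicator_setOf_lt (hf : Integrable f μ) (hf0 : 0 ≤ᵐ[μ] f) (hc : 0 ≤ c) :
    MemLp ({x | f x < c}.indicator f) 2 μ :=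
  (memLp_two_iff_integrable_sq (hf.1.indicator_setOf_lt c)).2 <|
    (hf.const_mul c).mono' ((hf.1.indicator_setOf_lt c).pow 2) <| hf0.mono fun _ hx => by
      rw [Real.norm_eq_abs, abs_sq]
      exact sq_indicator_setOf_lt_le_mul hc hx

theorem integral_sq_indicator_setOf_lt_le (hf : Integrable f μ) (hf0 : 0 ≤ᵐ[μ] f) (hc : 0 ≤ c) :
    ∫ x, ({y | f y < c}.indicator f x) ^ 2 ∂μ ≤ c * ∫ x, f x ∂μ := by
  rw [← integral_const_mul]
  exact integral_mono_of_nonneg (ae_of_all _ fun _ => sq_nonneg _) (hf.const_mul c)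
    (hf0.mono fun _ hx => sq_indicator_setOf_lt_le_mul hc hx)

end Truncation

theorem integral_sq_truncated_sum_le_general
    (Ω : Type*) [MeasurableSpace Ω] (P : Measure Ω) [IsProbabilityMeasure P]
    (X : ℕ → Ω → ℝ) (hmeas : ∀ k, Measurable (X k))
    (hindep : ProbabilityTheory.iIndepFun X P)
    (hunif : ∀ k, Measure.map (X k) P = volume.restrict (Set.Ioo 0 1))
    (f : ℝ → ℝ) (hf_int : IntegrableOn f (Set.Ioo 0 1))
    (hf_nonneg : ∀ x ∈ Set.Ioo (0:ℝ) 1, 0 ≤ f x)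
    (ε : ℝ) (hε : 0 < ε) (N : ℕ) :
    ∫ ω, ((N : ℝ)⁻¹ * ∑ k ∈ Finset.Icc 1 N,
        (Set.indicator {x : ℝ | f x < (k : ℝ) * ε} f (X k ω)
          - ∫ x in Set.Ioo 0 1 ∩ {x : ℝ | f x < (k : ℝ) * ε}, f x)) ^ 2 ∂P
      ≤ 2 * ε * ∫ x in Set.Ioo (0:ℝ) 1, f x := by
  have hf0 : 0 ≤ᵐ[volume.restrict (Set.Ioo 0 1)] f :=
    ae_restrict_of_forall_mem measurableSet_Ioo hf_nonneg
  set I := ∫ x in Set.Ioo (0:ℝ) 1, f x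
  have hI : 0 ≤ I := integral_nonneg_of_ae hf0
  have hcenter (k : ℕ) : ∫ x in Set.Ioo 0 1 ∩ {x | f x < k * ε}, f x
      = ∫ x in Set.Ioo 0 1, {x | f x < k * ε}.indicator f x :=
    (setIntegral_indicator₀ (nullMeasurableSet_lt hf_int.aemeasurable aemeasurable_const)).symm
  have hsecond (k : ℕ) (hk : k ∈ Finset.Icc 1 N) :
      ∫ x in Set.Ioo 0 1, ({y | f y < k * ε}.indicator f x) ^ 2 ≤ N * ε * I := by
    have hkN : (k : ℝ) ≤ N := by exact_mod_cast (Finset.mem_Icc.1 hk).2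
    refine (integral_sq_indicator_setOf_lt_le hf_int hf0 (by positivity)).trans ?_
    gcongr
  have hvar := integral_sq_sum_comp_sub_integral_le (fun k => (hmeas k).aemeasurable) hindep
    hunif (fun k => memLp_two_indicator_setOf_lt hf_int hf0 (by positivity : 0 ≤ (k : ℝ) * ε))
    (Finset.Icc 1 N)
  calc _ = (N : ℝ)⁻¹ ^ 2 * ∫ ω, (∑ k ∈ Finset.Icc 1 N, ({x | f x < k * ε}.indicator f (X k ω)
          - ∫ x in Set.Ioo 0 1, {x | f x < k * ε}.indicator f x)) ^ 2 ∂P := by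
        simp_rw [hcenter, mul_pow, integral_const_mul]
    _ ≤ (N : ℝ)⁻¹ ^ 2 * ∑ k ∈ Finset.Icc 1 N, N * ε * I := by
        gcongr
        exact hvar.trans (Finset.sum_le_sum hsecond)
    _ = ((N : ℝ)⁻¹ * N) ^ 2 * (ε * I) := by
        simp only [Finset.sum_const, Nat.card_Icc, nsmul_eq_mul]
        push_cast
        ring
    _ ≤ 2 * ε * I := by
        have hN : ((N : ℝ)⁻¹ * N) ^ 2 ≤ 1 :=
          pow_le_one₀ (by positivity) (inv_mul_le_one_of_le₀ le_rfl N.cast_nonneg)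
        nlinarith [mul_nonneg hε.le hI]

/-- Lemma 2.3: the variance-type estimate for truncated sums. -/
theorem integral_sq_truncated_sum_le
    (Ω : Type*) [MeasurableSpace Ω] (P : Measure Ω) [IsProbabilityMeasure P]
    (X : ℕ → Ω → ℝ) (hmeas : ∀ k, Measurable (X k))
    (hindep : ProbabilityTheory.iIndepFun X P)
    (hunif : ∀ k, Measure.map (X k) P = volume.restrict (Set.Ioo 0 1))
    (f : ℝ → ℝ) (hf_int : IntegrableOn f (Set.Ioo 0 1))
    (hf_nonneg : ∀ x ∈ Set.Ioo (0:ℝ) 1, 0 ≤ f x)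
    (ε : ℝ) (hε : 0 < ε) (N : ℕ) (hN : 0 < N) :
    ∫ ω, ((N : ℝ)⁻¹ * ∑ k ∈ Finset.Icc 1 N,
        (Set.indicator {x : ℝ | f x < (k : ℝ) * ε} f (X k ω)
          - ∫ x in Set.Ioo 0 1 ∩ {x : ℝ | f x < (k : ℝ) * ε}, f x)) ^ 2 ∂P
      ≤ 2 * ε * ∫ x in Set.Ioo (0:ℝ) 1, f x :=
  integral_sq_truncated_sum_le_general Ω P X hmeas hindep hunif f hf_int hf_nonneg ε hε N
end

section
/- Let f be a Lebesgue integrable non-negative real-valued function on (0,1). For m ∈ ℕ define F_m((x_i)) = limsup_{N→∞} (1/N²) ( Σ_{k=1}^N ( f(x_k)·χ_{{x : f(x) < k/m}}(x_k) − ∫_{{x : f(x) < k/m}} f(x) dx ) )². Then ∫_{(0,1)^∞} F_m dℓ_1^∞ ≤ (2/m) ∫_0^1 f(x) dx. -/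
/-!
With the normalisation `1/N²` the integrand vanishes almost surely. By Etemadi's strong law,
`(1/N) ∑ f(x_k) → ∫ f`; the truncated means `∫_{f < k/m} f` tend to `∫ f` by dominated
convergence, hence so do their Cesàro means; and the strong law also forces `f(x_k) = o(k)`,
so the truncation at level `k/m` is eventually inactive along almost every sample path. Thus
the averages inside the square tend to `0`, `F_m = 0` almost everywhere, and `∫ F_m = 0`.
-/

open MeasureTheory Filter Topology Finset ProbabilityTheory

theorem sum_Icc_one_eq_sum_range_succ {M : Type*} [AddCommMonoid M] (u : ℕ → M) (n : ℕ) :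
    ∑ k ∈ Icc 1 n, u k = ∑ i ∈ range n, u (i + 1) := by
  rw [range_eq_Ico, sum_Ico_add' u 0 n 1]
  rfl

/-- With `S n = ∑ i ∈ range n, u i`, both terms of
`u n / (n + 1) = S (n + 1) / (n + 1) - S n / (n + 1)` tend to `l`. -/
theorem eventually_lt_mul_of_tendsto_sum_range_div {u : ℕ → ℝ} {l : ℝ}
    (h : Tendsto (fun n : ℕ => (∑ i ∈ range n, u i) / n) atTop (𝓝 l)) {c : ℝ} (hc : 0 < c) :
    ∀ᶠ n : ℕ in atTop, u n < c * n := by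
  have hsucc : Tendsto (fun n : ℕ => u n / (n + 1)) atTop (𝓝 0) := by
    have h₁ : Tendsto (fun n : ℕ => (∑ i ∈ range (n + 1), u i) / (n + 1 : ℕ)) atTop (𝓝 l) :=
      h.comp (tendsto_add_atTop_nat 1)
    have h₂ : Tendsto (fun n : ℕ => (∑ i ∈ range n, u i) / n * (n / (n + 1))) atTop
        (𝓝 (l * 1)) :=
      h.mul (tendsto_natCast_div_add_atTop 1)
    rw [mul_one] at h₂
    rw [← sub_self l]
    refine (h₁.sub h₂).congr' ?_
    filter_upwards [eventually_ge_atTop 1] with n hn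
    have hn' : (n : ℝ) ≠ 0 := by positivity
    rw [sum_range_succ]
    push_cast
    field_simp
    ring
  filter_upwards [hsucc.eventually (gt_mem_nhds (half_pos hc)), eventually_ge_atTop 1]
    with n hn hn1
  have hpos : (0 : ℝ) < n + 1 := by positivity
  rw [div_lt_iff₀ hpos] at hn
  have : (1 : ℝ) ≤ n := by exact_mod_cast hn1
  nlinarith

theorem tendsto_integral_indicator_Iio {α : Type*} [MeasurableSpace α] {μ : Measure α}
    {f : α → ℝ} (hf : Integrable f μ) :
    Tendsto (fun A => ∫ x, (Set.Iio A).indicator id (f x) ∂μ) atTop (𝓝 (∫ x, f x ∂μ)) := by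
  refine tendsto_integral_filter_of_dominated_convergence (fun x => ‖f x‖) ?_ ?_ hf.norm ?_
  · exact Eventually.of_forall fun A =>
      (measurable_id.indicator measurableSet_Iio).comp_aemeasurable hf.1.aemeasurable
        |>.aestronglyMeasurable
  · refine Eventually.of_forall fun A => Eventually.of_forall fun x => ?_
    exact norm_indicator_le_norm_self _ _
  · refine Eventually.of_forall fun x => tendsto_const_nhds.congr' ?_
    filter_upwards [eventually_gt_atTop (f x)] with A hA
    exact (Set.indicator_of_mem (Set.mem_Iio.2 hA) id).symm

theorem strong_law_ae_indicator_Iio {Ω : Type*} [MeasurableSpace Ω] {P : Measure Ω}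
    (Z : ℕ → Ω → ℝ) (hint : Integrable (Z 0) P)
    (hindep : Pairwise (Function.onFun (IndepFun · · P) Z))
    (hident : ∀ i, IdentDistrib (Z i) (Z 0) P P) {t : ℕ → ℝ} {c : ℝ} (hc : 0 < c)
    (ht : ∀ i, c * i ≤ t i) :
    ∀ᵐ ω ∂P, Tendsto (fun n : ℕ => (∑ i ∈ range n, ((Set.Iio (t i)).indicator id (Z i ω)
      - ∫ ω', (Set.Iio (t i)).indicator id (Z 0 ω') ∂P)) / n) atTop (𝓝 0) := by
  have hmean : Tendsto (fun i => ∫ ω', (Set.Iio (t i)).indicator id (Z 0 ω') ∂P) atTop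
      (𝓝 (∫ ω', Z 0 ω' ∂P)) :=
    (tendsto_integral_indicator_Iio hint).comp
      (tendsto_atTop_mono ht (tendsto_natCast_atTop_atTop.const_mul_atTop hc))
  filter_upwards [strong_law_ae_real Z hint hindep hident] with ω hω
  -- the strong law makes `Z i ω = o(i)`, so the truncation at `t i ≥ c i` is eventually inactive
  have hcut : Tendsto (fun i => Z i ω - (Set.Iio (t i)).indicator id (Z i ω)) atTop (𝓝 0) := by
    refine tendsto_const_nhds.congr' ?_
    filter_upwards [eventually_lt_mul_of_tendsto_sum_range_div hω hc] with i hi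
    rw [Set.indicator_of_mem (Set.mem_Iio.2 (hi.trans_le (ht i))), id, sub_self]
  have := (hω.sub hcut.cesaro).sub hmean.cesaro
  rw [sub_zero, sub_self] at this
  refine this.congr' ?_
  filter_upwards [eventually_ge_atTop 1] with n hn
  simp only [sum_sub_distrib]
  field_simp
  ring

theorem setIntegral_setOf_lt_eq_integral_indicator_Iio {α : Type*} [MeasurableSpace α]
    {μ : Measure α} {f : α → ℝ} (hf : AEStronglyMeasurable f μ) (a : ℝ) :
    ∫ x in {x | f x < a}, f x ∂μ = ∫ x, (Set.Iio a).indicator id (f x) ∂μ :=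
  (integral_indicator₀ (hf.nullMeasurableSet_lt aestronglyMeasurable_const)).symm

theorem strong_law_ae_indicator_Iio_comp {Ω α : Type*} [MeasurableSpace Ω]
    [MeasurableSpace α] {P : Measure Ω} {μ : Measure α} (X : ℕ → Ω → α)
    (hmeas : ∀ i, Measurable (X i))
    (hindep : Pairwise (Function.onFun (IndepFun · · P) X))
    (hlaw : ∀ i, Measure.map (X i) P = μ) {f : α → ℝ} (hf : Integrable f μ)
    {t : ℕ → ℝ} {c : ℝ} (hc : 0 < c) (ht : ∀ i, c * i ≤ t i) :
    ∀ᵐ ω ∂P, Tendsto (fun n : ℕ => (∑ i ∈ range n, ((Set.Iio (t i)).indicator id (f (X i ω))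
      - ∫ x, (Set.Iio (t i)).indicator id (f x) ∂μ)) / n) atTop (𝓝 0) := by
  obtain ⟨g, hg, hfg⟩ := hf.1.aemeasurable
  have hident : ∀ i, IdentDistrib (X i) (X 0) P P := fun i =>
    ⟨(hmeas i).aemeasurable, (hmeas 0).aemeasurable, by rw [hlaw i, hlaw 0]⟩
  have hint : Integrable (g ∘ X 0) P := by
    rw [← integrable_map_measure hg.aestronglyMeasurable (hmeas 0).aemeasurable, hlaw 0]
    exact hf.congr hfg
  have hmean : ∀ a, ∫ x, (Set.Iio a).indicator id (f x) ∂μ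
      = ∫ ω, (Set.Iio a).indicator id (g (X 0 ω)) ∂P := fun a => by
    refine (integral_congr_ae (hfg.fun_comp ((Set.Iio a).indicator id))).trans ?_
    rw [← hlaw 0]
    exact integral_map (hmeas 0).aemeasurable
      ((measurable_id.indicator measurableSet_Iio).comp hg).aestronglyMeasurable
  have hfg_path : ∀ᵐ ω ∂P, ∀ i, f (X i ω) = g (X i ω) := ae_all_iff.2 fun i =>
    ae_eq_comp (hmeas i).aemeasurable (by rw [hlaw i]; exact hfg)
  filter_upwards [strong_law_ae_indicator_Iio (fun i => g ∘ X i) hint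
    (fun i j hij => (hindep hij).comp hg hg) (fun i => (hident i).comp hg) hc ht, hfg_path]
    with ω hω hpath
  simpa only [hpath, hmean, Function.comp_apply] using hω

theorem integral_limsup_le_general
    (Ω : Type*) [MeasurableSpace Ω] (P : Measure Ω)
    (X : ℕ → Ω → ℝ) (hmeas : ∀ k, Measurable (X k))
    (hindep : ProbabilityTheory.iIndepFun X P)
    (hunif : ∀ k, Measure.map (X k) P = volume.restrict (Set.Ioo 0 1))
    (f : ℝ → ℝ) (hf_int : IntegrableOn f (Set.Ioo 0 1))
    (hf_nonneg : ∀ x ∈ Set.Ioo (0:ℝ) 1, 0 ≤ f x)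
    (m : ℕ) (hm : 0 < m) :
    ∫ ω, Filter.limsup (fun N : ℕ => ((N : ℝ) ^ 2)⁻¹ *
        (∑ k ∈ Finset.Icc 1 N,
          (Set.indicator {x : ℝ | f x < (k : ℝ) / m} f (X k ω)
            - ∫ x in Set.Ioo 0 1 ∩ {x : ℝ | f x < (k : ℝ) / m}, f x)) ^ 2) atTop ∂P
      ≤ (2 / m) * ∫ x in Set.Ioo (0:ℝ) 1, f x := by
  have hslln := strong_law_ae_indicator_Iio_comp (fun i => X (i + 1)) (fun i => hmeas _)
    (fun i j hij => hindep.indepFun (by simpa using hij)) (fun i => hunif _) hf_int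
    (t := fun i => ((i + 1 : ℕ) : ℝ) / m) (inv_pos.2 (Nat.cast_pos.2 hm))
    fun i => by rw [inv_mul_eq_div]; gcongr; simp
  refine (integral_congr_ae (g := fun _ => (0 : ℝ)) ?_).trans_le ?_
  · filter_upwards [hslln] with ω hω
    refine Tendsto.limsup_eq ?_
    have hsq := hω.pow 2
    rw [zero_pow two_ne_zero] at hsq
    refine hsq.congr fun N => ?_
    rw [div_pow, div_eq_inv_mul, sum_Icc_one_eq_sum_range_succ]
    congr 2
    refine sum_congr rfl fun i _ => ?_
    rw [Set.inter_comm, ← Measure.restrict_restrict' measurableSet_Ioo,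
      setIntegral_setOf_lt_eq_integral_indicator_Iio hf_int.1]
    rfl
  · rw [integral_zero]
    exact mul_nonneg (by positivity) (setIntegral_nonneg measurableSet_Ioo hf_nonneg)

/-- Lemma 2.4: the integral of
`F_m((x_i)) = limsup_N (1/N²)(∑_{k=1}^N (f(x_k)χ_{{f < k/m}}(x_k) − ∫_{{f < k/m}} f))²`
over the infinite power of Lebesgue measure on `(0,1)` is at most `(2/m)∫₀¹ f`. -/
theorem integral_limsup_le
    (Ω : Type*) [MeasurableSpace Ω] (P : Measure Ω) [IsProbabilityMeasure P]
    (X : ℕ → Ω → ℝ) (hmeas : ∀ k, Measurable (X k))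
    (hindep : ProbabilityTheory.iIndepFun X P)
    (hunif : ∀ k, Measure.map (X k) P = volume.restrict (Set.Ioo 0 1))
    (f : ℝ → ℝ) (hf_int : IntegrableOn f (Set.Ioo 0 1))
    (hf_nonneg : ∀ x ∈ Set.Ioo (0:ℝ) 1, 0 ≤ f x)
    (m : ℕ) (hm : 0 < m) :
    ∫ ω, Filter.limsup (fun N : ℕ => ((N : ℝ) ^ 2)⁻¹ *
        (∑ k ∈ Finset.Icc 1 N,
          (Set.indicator {x : ℝ | f x < (k : ℝ) / m} f (X k ω)
            - ∫ x in Set.Ioo 0 1 ∩ {x : ℝ | f x < (k : ℝ) / m}, f x)) ^ 2) atTop ∂P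
      ≤ (2 / m) * ∫ x in Set.Ioo (0:ℝ) 1, f x :=
  integral_limsup_le_general Ω P X hmeas hindep hunif f hf_int hf_nonneg m hm
end

section
/- Let f be a Lebesgue integrable non-negative real-valued function on (0,1). With F_s defined by F_s((x_i)) = limsup_{N→∞} (1/N²) ( Σ_{k=1}^N ( f(x_k)·χ_{{x : f(x) < k/s}}(x_k) − ∫_{{x : f(x) < k/s}} f(x) dx ) )², the set of sequences (x_k) ∈ (0,1)^∞ for which lim_{s→∞} F_s((x_i)) = 0 has ℓ_1^∞-measure one. -/
open MeasureTheory Filter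

open ProbabilityTheory

open scoped Topology ENNReal

/-!
For each fixed `s > 0` the Cesàro averages of `f(x_k) χ_{f < k/s}(x_k) − ∫_{f < k/s} f` already
tend to `0` almost surely, so `F_s = 0` almost surely for every `s ≥ 1`. By the strong law of
large numbers the averages of `f(x_k)` tend to `∫ f`. Since
`∑_k P(f(x_k) ≥ k/s) ≤ s ∫ |f| + 1 < ∞`, Borel–Cantelli shows that the truncation changes only
finitely many terms, and the truncated means `∫_{f < k/s} f` increase to `∫ f`, so their Cesàro
averages do too. Passing to a measurable version of `f`, which agrees with `f` at every `x_k`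
almost surely, makes all the truncation sets measurable.
-/

theorem tendsto_inv_mul_sum_Icc_of_cesaro {u : ℕ → ℝ} {l : ℝ}
    (h : Tendsto (fun n : ℕ => (n : ℝ)⁻¹ * ∑ i ∈ Finset.range n, u i) atTop (𝓝 l)) :
    Tendsto (fun N : ℕ => (N : ℝ)⁻¹ * ∑ k ∈ Finset.Icc 1 N, u k) atTop (𝓝 l) := by
  have hshift : Tendsto (fun N : ℕ => (1 + (N : ℝ)⁻¹) *
      (((N + 1 : ℕ) : ℝ)⁻¹ * ∑ i ∈ Finset.range (N + 1), u i) - u 0 * (N : ℝ)⁻¹) atTop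
      (𝓝 ((1 + 0) * l - u 0 * 0)) :=
    ((tendsto_const_nhds.add tendsto_inv_atTop_nhds_zero_nat).mul
      (h.comp (tendsto_add_atTop_nat 1))).sub
      (tendsto_const_nhds.mul tendsto_inv_atTop_nhds_zero_nat)
  rw [add_zero, one_mul, mul_zero, sub_zero] at hshift
  refine hshift.congr' ((eventually_ne_atTop 0).mono fun N hN => ?_)
  have hsum : ∑ i ∈ Finset.range (N + 1), u i = u 0 + ∑ k ∈ Finset.Icc 1 N, u k := by
    rw [Finset.range_eq_Ico, Finset.sum_eq_sum_Ico_succ_bot N.succ_pos]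
    rfl
  rw [hsum]
  field_simp
  push_cast
  ring

theorem tsum_ite_natCast_le_le (t : ℝ) :
    ∑' k : ℕ, (if (k : ℝ) ≤ t then (1 : ℝ≥0∞) else 0) ≤ ENNReal.ofReal t + 1 := by
  have hsupp : ∀ k ∉ Finset.range (⌊t⌋₊ + 1), (if (k : ℝ) ≤ t then (1 : ℝ≥0∞) else 0) = 0 := by
    intro k hk
    rw [if_neg]
    contrapose! hk
    exact Finset.mem_range_succ_iff.2 (Nat.le_floor hk)
  rw [tsum_eq_sum hsupp]
  calc ∑ k ∈ Finset.range (⌊t⌋₊ + 1), (if (k : ℝ) ≤ t then (1 : ℝ≥0∞) else 0)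
      ≤ ∑ _k ∈ Finset.range (⌊t⌋₊ + 1), 1 := Finset.sum_le_sum fun k _ => by split_ifs <;> simp
    _ = (⌊t⌋₊ : ℝ≥0∞) + 1 := by simp
    _ ≤ ENNReal.ofReal t + 1 := by
      gcongr
      rcases le_or_gt 0 t with ht | ht
      · exact (ENNReal.ofReal_natCast _).symm.trans_le (ENNReal.ofReal_le_ofReal (Nat.floor_le ht))
      · simp [Nat.floor_of_nonpos ht.le]

theorem tsum_measure_natCast_le_ne_top {α : Type*} [MeasurableSpace α] {μ : Measure α}
    [IsFiniteMeasure μ] {h : α → ℝ} (hmeas : Measurable h) (hint : Integrable h μ) :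
    ∑' k : ℕ, μ {x | (k : ℝ) ≤ h x} ≠ ∞ := by
  refine ne_of_lt ?_
  have hset : ∀ k : ℕ, MeasurableSet {x | (k : ℝ) ≤ h x} := fun k =>
    measurableSet_le measurable_const hmeas
  calc ∑' k : ℕ, μ {x | (k : ℝ) ≤ h x}
      = ∫⁻ x, ∑' k : ℕ, {x | (k : ℝ) ≤ h x}.indicator 1 x ∂μ := by
        rw [lintegral_tsum fun k => (measurable_one.indicator (hset k)).aemeasurable]
        simp only [lintegral_indicator_one (hset _)]
    _ ≤ ∫⁻ x, (ENNReal.ofReal (h x) + 1) ∂μ := by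
        refine lintegral_mono fun x => ?_
        simpa only [Set.indicator_apply, Set.mem_ofPred_eq, Pi.one_apply]
          using tsum_ite_natCast_le_le (h x)
    _ = ∫⁻ x, ENNReal.ofReal (h x) ∂μ + μ Set.univ := by
        rw [lintegral_add_right _ measurable_const, lintegral_one]
    _ < ∞ := ENNReal.add_lt_top.2 ⟨hint.lintegral_lt_top, measure_lt_top μ _⟩

section TruncatedStrongLaw

variable {Ω : Type*} [MeasurableSpace Ω] {P : Measure Ω} {Y : ℕ → Ω → ℝ} {s : ℝ}

theorem tendsto_setIntegral_setOf_lt_div_natCast {Z : Ω → ℝ} (hmeas : Measurable Z)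
    (hint : Integrable Z P) (hs : 0 < s) :
    Tendsto (fun k : ℕ => ∫ ω in {ω | Z ω < k / s}, Z ω ∂P) atTop (𝓝 (∫ ω, Z ω ∂P)) := by
  have hunion : ⋃ k : ℕ, {ω | Z ω < k / s} = Set.univ :=
    Set.eq_univ_of_forall fun ω => Set.mem_iUnion.2 <| by
      obtain ⟨k, hk⟩ := exists_nat_gt (Z ω * s)
      exact ⟨k, (lt_div_iff₀ hs).2 hk⟩
  have hmono : Monotone fun k : ℕ => {ω | Z ω < k / s} := fun k l hkl ω hω =>
    hω.trans_le (div_le_div_of_nonneg_right (Nat.cast_le.2 hkl) hs.le)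
  have := tendsto_setIntegral_of_monotone (fun k => measurableSet_lt hmeas measurable_const)
    hmono (by rw [hunion]; exact hint.integrableOn)
  rwa [hunion, setIntegral_univ] at this

theorem ae_finite_setOf_div_natCast_le [IsFiniteMeasure P] (hmeas : Measurable (Y 0))
    (hint : Integrable (Y 0) P) (hident : ∀ k, IdentDistrib (Y k) (Y 0) P P) (hs : 0 < s) :
    ∀ᵐ ω ∂P, {k : ℕ | (k : ℝ) / s ≤ Y k ω}.Finite := by
  refine ae_finite_setOfPred_mem (s := fun k : ℕ => {ω | (k : ℝ) / s ≤ Y k ω}) ?_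
  have hlaw : ∀ k : ℕ, P {ω | (k : ℝ) / s ≤ Y k ω} = P {ω | (k : ℝ) ≤ s * Y 0 ω} := fun k => by
    rw [show {ω | (k : ℝ) / s ≤ Y k ω} = Y k ⁻¹' Set.Ici (k / s) from rfl,
      (hident k).measure_mem_eq measurableSet_Ici]
    simp only [Set.preimage, Set.mem_Ici, div_le_iff₀ hs, mul_comm]
  simpa only [hlaw] using tsum_measure_natCast_le_ne_top (hmeas.const_mul s) (hint.const_mul s)

theorem strong_law_ae_truncation_sub_setIntegral [IsFiniteMeasure P] (hmeas : ∀ k, Measurable (Y k))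
    (hint : Integrable (Y 0) P) (hindep : Pairwise (Function.onFun (IndepFun · · P) Y))
    (hident : ∀ k, IdentDistrib (Y k) (Y 0) P P) (hs : 0 < s) :
    ∀ᵐ ω ∂P, Tendsto (fun n : ℕ => (n : ℝ)⁻¹ * ∑ k ∈ Finset.range n,
      ({ω | Y k ω < k / s}.indicator (Y k) ω - ∫ ω' in {ω' | Y 0 ω' < k / s}, Y 0 ω' ∂P))
      atTop (𝓝 0) := by
  have hmean := (tendsto_setIntegral_setOf_lt_div_natCast (hmeas 0) hint hs).cesaro
  filter_upwards [strong_law_ae_real Y hint hindep hident,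
    ae_finite_setOf_div_natCast_le (hmeas 0) hint hident hs] with ω hslln htail
  have hexcess : Tendsto (fun k : ℕ => {ω | Y k ω < k / s}ᶜ.indicator (Y k) ω) atTop (𝓝 0) := by
    refine tendsto_const_nhds.congr' ?_
    filter_upwards [Nat.cofinite_eq_atTop ▸ htail.eventually_cofinite_notMem] with k hk
    exact (Set.indicator_of_notMem (fun h => hk (not_lt.1 h)) _).symm
  have htrunc : Tendsto (fun n : ℕ => (n : ℝ)⁻¹ * ∑ k ∈ Finset.range n,
      {ω | Y k ω < k / s}.indicator (Y k) ω) atTop (𝓝 (∫ ω, Y 0 ω ∂P)) := by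
    simp only [div_eq_inv_mul] at hslln
    refine (sub_zero (∫ ω, Y 0 ω ∂P) ▸ hslln.sub hexcess.cesaro).congr fun n => ?_
    rw [← mul_sub, ← Finset.sum_sub_distrib]
    congr 1
    exact Finset.sum_congr rfl fun k _ =>
      (eq_sub_of_add_eq (Set.indicator_self_add_compl_apply _ _ _)).symm
  simpa only [sub_self, mul_sub, Finset.sum_sub_distrib] using htrunc.sub hmean

end TruncatedStrongLaw

theorem strong_law_ae_truncation_comp_sub_setIntegral {Ω β : Type*} [MeasurableSpace Ω]
    [MeasurableSpace β] {P : Measure Ω} [IsFiniteMeasure P] {μ : Measure β} {X : ℕ → Ω → β}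
    (hmeas : ∀ k, Measurable (X k)) (hindep : iIndepFun X P) (hlaw : ∀ k, P.map (X k) = μ)
    {g : β → ℝ} (hg : Measurable g) (hint : Integrable g μ) {s : ℝ} (hs : 0 < s) :
    ∀ᵐ ω ∂P, Tendsto (fun n : ℕ => (n : ℝ)⁻¹ * ∑ k ∈ Finset.range n,
      ({x | g x < k / s}.indicator g (X k ω) - ∫ x in {x | g x < k / s}, g x ∂μ))
      atTop (𝓝 0) := by
  have hident : ∀ k, IdentDistrib (g ∘ X k) (g ∘ X 0) P P := fun k =>
    IdentDistrib.comp ⟨(hmeas k).aemeasurable, (hmeas 0).aemeasurable, by rw [hlaw, hlaw]⟩ hg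
  have hint₀ : Integrable (g ∘ X 0) P :=
    (integrable_map_measure hg.aestronglyMeasurable (hmeas 0).aemeasurable).1 (by rwa [hlaw 0])
  have hsetIntegral : ∀ c : ℝ,
      ∫ ω in {ω | g (X 0 ω) < c}, g (X 0 ω) ∂P = ∫ x in {x | g x < c}, g x ∂μ := fun c => by
    rw [← hlaw 0, setIntegral_map (measurableSet_lt hg measurable_const)
      hg.aestronglyMeasurable (hmeas 0).aemeasurable]
    rfl
  filter_upwards [strong_law_ae_truncation_sub_setIntegral (fun k => hg.comp (hmeas k)) hint₀
    (fun i j hij => (hindep.comp (fun _ => g) fun _ => hg).indepFun hij) hident hs] with ω hω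
  simpa only [Function.comp_apply, hsetIntegral, Set.indicator_apply, Set.mem_ofPred_eq] using hω

theorem setIntegral_inter_setOf_lt_eq_of_ae_eq {α : Type*} [MeasurableSpace α] {μ : Measure α}
    {t : Set α} (ht : MeasurableSet t) {f g : α → ℝ} (hg : Measurable g)
    (hfg : f =ᵐ[μ.restrict t] g) (c : ℝ) :
    ∫ x in t ∩ {x | f x < c}, f x ∂μ = ∫ x in {x | g x < c}, g x ∂μ.restrict t := by
  have hsets : ({x | f x < c} ∩ t : Set α) =ᵐ[μ] ({x | g x < c} ∩ t : Set α) := by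
    filter_upwards [(ae_restrict_iff' ht).1 hfg] with x hx
    exact propext (and_congr_left fun hxt => by rw [Set.mem_ofPred_eq, Set.mem_ofPred_eq, hx hxt])
  rw [Measure.restrict_restrict (measurableSet_lt hg measurable_const), Set.inter_comm t,
    Measure.restrict_congr_set hsets]
  exact integral_congr_ae
    (hfg.filter_mono (ae_mono (Measure.restrict_mono Set.inter_subset_right le_rfl)))

theorem ae_tendsto_limsup_zero_general
    (Ω : Type*) [MeasurableSpace Ω] (P : Measure Ω) [IsProbabilityMeasure P]
    (X : ℕ → Ω → ℝ) (hmeas : ∀ k, Measurable (X k))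
    (hindep : ProbabilityTheory.iIndepFun X P)
    (hunif : ∀ k, Measure.map (X k) P = volume.restrict (Set.Ioo 0 1))
    (f : ℝ → ℝ) (hf_int : IntegrableOn f (Set.Ioo 0 1)) :
    ∀ᵐ ω ∂P, Tendsto (fun s : ℕ =>
        Filter.limsup (fun N : ℕ => ((N : ℝ) ^ 2)⁻¹ *
          (∑ k ∈ Finset.Icc 1 N,
            (Set.indicator {x : ℝ | f x < (k : ℝ) / s} f (X k ω)
              - ∫ x in Set.Ioo 0 1 ∩ {x : ℝ | f x < (k : ℝ) / s}, f x)) ^ 2) atTop)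
      atTop (nhds 0) := by
  obtain ⟨g, hg, hfg⟩ : ∃ g : ℝ → ℝ, Measurable g ∧ f =ᵐ[volume.restrict (Set.Ioo 0 1)] g :=
    ⟨_, hf_int.aestronglyMeasurable.stronglyMeasurable_mk.measurable,
      hf_int.aestronglyMeasurable.ae_eq_mk⟩
  have hXfg : ∀ᵐ ω ∂P, ∀ k, f (X k ω) = g (X k ω) :=
    ae_all_iff.2 fun k => ae_of_ae_map (hmeas k).aemeasurable (by rwa [hunif k])
  have hcesaro : ∀ᵐ ω ∂P, ∀ s : ℕ, 0 < s → Tendsto (fun n : ℕ => (n : ℝ)⁻¹ *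
      ∑ k ∈ Finset.range n, ({x | g x < k / s}.indicator g (X k ω)
        - ∫ x in {x | g x < k / s}, g x ∂volume.restrict (Set.Ioo 0 1))) atTop (𝓝 0) :=
    ae_all_iff.2 fun s => by
      rcases s.eq_zero_or_pos with rfl | hs
      · exact ae_of_all _ fun _ h => absurd h (lt_irrefl 0)
      · exact (strong_law_ae_truncation_comp_sub_setIntegral hmeas hindep hunif hg
          (hf_int.congr hfg) (Nat.cast_pos.2 hs)).mono fun _ h _ => h
  filter_upwards [hXfg, hcesaro] with ω hωfg hω
  refine tendsto_const_nhds.congr' ((eventually_gt_atTop 0).mono fun s hs => ?_)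
  have hterm : ∀ k : ℕ, {x | f x < k / s}.indicator f (X k ω)
      - ∫ x in Set.Ioo 0 1 ∩ {x | f x < k / s}, f x
      = {x | g x < k / s}.indicator g (X k ω)
        - ∫ x in {x | g x < k / s}, g x ∂volume.restrict (Set.Ioo 0 1) := fun k => by
    rw [setIntegral_inter_setOf_lt_eq_of_ae_eq measurableSet_Ioo hg hfg]
    simp only [Set.indicator_apply, Set.mem_ofPred_eq, hωfg k]
  simp only [hterm, ← inv_pow, ← mul_pow]
  exact (((tendsto_inv_mul_sum_Icc_of_cesaro (hω s hs)).pow 2).limsup_eq.trans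
    (zero_pow two_ne_zero)).symm

/-- Lemma 2.5: for almost every sequence `(x_k)` in `(0,1)^∞`,
`F_s((x_i)) = limsup_N (1/N²)(∑_{k=1}^N (f(x_k)χ_{{f < k/s}}(x_k) − ∫_{{f < k/s}} f))²`
tends to `0` as `s → ∞`. -/
theorem ae_tendsto_limsup_zero
    (Ω : Type*) [MeasurableSpace Ω] (P : Measure Ω) [IsProbabilityMeasure P]
    (X : ℕ → Ω → ℝ) (hmeas : ∀ k, Measurable (X k))
    (hindep : ProbabilityTheory.iIndepFun X P)
    (hunif : ∀ k, Measure.map (X k) P = volume.restrict (Set.Ioo 0 1))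
    (f : ℝ → ℝ) (hf_int : IntegrableOn f (Set.Ioo 0 1))
    (hf_nonneg : ∀ x ∈ Set.Ioo (0:ℝ) 1, 0 ≤ f x) :
    ∀ᵐ ω ∂P, Tendsto (fun s : ℕ =>
        Filter.limsup (fun N : ℕ => ((N : ℝ) ^ 2)⁻¹ *
          (∑ k ∈ Finset.Icc 1 N,
            (Set.indicator {x : ℝ | f x < (k : ℝ) / s} f (X k ω)
              - ∫ x in Set.Ioo 0 1 ∩ {x : ℝ | f x < (k : ℝ) / s}, f x)) ^ 2) atTop)
      atTop (nhds 0) :=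
  ae_tendsto_limsup_zero_general Ω P X hmeas hindep hunif f hf_int
end

section
/- Let f : (0,1) → ℝ be Lebesgue integrable. Then the set S_f of sequences (x_k) ∈ (0,1)^∞ on which the following four conditions hold simultaneously — (1) lim_n f(x_n)/n = 0; (2) lim_N (1/N) Σ_{k=1}^N f(x_k) exists; (3) lim_N (1/N) Σ_{k=1}^N f(x_k) = ∫_{(0,1)} f dx; (4) (x_k) is uniformly distributed in (0,1) — has ℓ_1^∞-measure one. -/
open MeasureTheory Filter

/-- `(s_n)` is uniformly distributed in `(0,1)`. -/
def IsUniformlyDistributed (x : ℕ → ℝ) : Prop :=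
  ∀ c d : ℝ, 0 ≤ c → c ≤ d → d ≤ 1 →
    Tendsto (fun n : ℕ =>
        (((Finset.range n).filter fun k => x k ∈ Set.Icc c d).card : ℝ) / n)
      atTop (nhds (d - c))

/-!
By the strong law of large numbers applied to `f ∘ X k`, almost surely the Cesàro means of
`f (X k)` tend to `∫ f`. Conditions (1)–(3) are deterministic consequences of this, since
`f (X n) / n` is the difference of two consecutive normalised partial sums. For (4), apply the
same law to the indicators of the countably many intervals with rational endpoints, and squeeze an
arbitrary `[c, d]` between rational intervals: the counting frequency is monotone in the interval.
-/

open ProbabilityTheory Finset Topology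

section Cesaro

variable {a : ℕ → ℝ} {L : ℝ}

theorem tendsto_sum_range_succ_div
    (h : Tendsto (fun n : ℕ => (∑ i ∈ range n, a i) / n) atTop (𝓝 L)) :
    Tendsto (fun n : ℕ => (∑ i ∈ range (n + 1), a i) / n) atTop (𝓝 L) := by
  have h_shift :
      Tendsto (fun n : ℕ => (∑ i ∈ range (n + 1), a i) / ((n : ℝ) + 1)) atTop (𝓝 L) := by
    simpa [Function.comp_def] using h.comp (tendsto_add_atTop_nat 1)
  have h_ratio : Tendsto (fun n : ℕ => ((n : ℝ) + 1) / n) atTop (𝓝 1) := by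
    simpa using (tendsto_natCast_div_add_atTop (1 : ℝ)).inv₀ one_ne_zero
  refine (mul_one L ▸ h_shift.mul h_ratio).congr' ?_
  filter_upwards [eventually_ne_atTop 0] with n hn
  rw [div_mul_div_cancel₀ (by positivity)]

theorem tendsto_div_natCast_of_tendsto_cesaro
    (h : Tendsto (fun n : ℕ => (∑ i ∈ range n, a i) / n) atTop (𝓝 L)) :
    Tendsto (fun n : ℕ => a n / n) atTop (𝓝 0) := by
  refine (sub_self L ▸ (tendsto_sum_range_succ_div h).sub h).congr fun n => ?_
  rw [sum_range_succ, add_div, add_sub_cancel_left]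

theorem tendsto_inv_mul_sum_Icc_of_tendsto_cesaro
    (h : Tendsto (fun n : ℕ => (∑ i ∈ range n, a i) / n) atTop (𝓝 L)) :
    Tendsto (fun n : ℕ => (n : ℝ)⁻¹ * ∑ k ∈ Icc 1 n, a k) atTop (𝓝 L) := by
  refine (sub_zero L ▸ (tendsto_sum_range_succ_div h).sub
    (tendsto_const_div_atTop_nhds_zero_nat (a 0))).congr fun n => ?_
  rw [sum_range_eq_add_Ico a (Nat.add_one_pos n), Ico_add_one_right_eq_Icc, add_div,
    add_sub_cancel_left, div_eq_inv_mul]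

end Cesaro

theorem strong_law_ae_comp {Ω α : Type*} [MeasurableSpace Ω] [MeasurableSpace α]
    {P : Measure Ω} {μ : Measure α} {X : ℕ → Ω → α} (hX : ∀ i, AEMeasurable (X i) P)
    (hindep : iIndepFun X P) (hlaw : ∀ i, P.map (X i) = μ) {f : α → ℝ} (hf : Integrable f μ) :
    ∀ᵐ ω ∂P, Tendsto (fun n : ℕ => (∑ i ∈ range n, f (X i ω)) / n) atTop
      (𝓝 (∫ x, f x ∂μ)) := by
  have hf_law : ∀ i, AEMeasurable f (P.map (X i)) := fun i => hlaw i ▸ hf.aemeasurable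
  have hident : ∀ i, IdentDistrib (f ∘ X i) (f ∘ X 0) P P := fun i =>
    IdentDistrib.comp_of_aemeasurable ⟨hX i, hX 0, (hlaw i).trans (hlaw 0).symm⟩ (hf_law i)
  have hpair : Pairwise (Function.onFun (· ⟂ᵢ[P] ·) fun i => f ∘ X i) := fun i j hij =>
    (hindep.indepFun hij).comp₀ (hX i) (hX j) (hf_law i) (hf_law j)
  have hint : Integrable (f ∘ X 0) P := ((hlaw 0).symm ▸ hf).comp_aemeasurable (hX 0)
  have hmean : ∫ ω, (f ∘ X 0) ω ∂P = ∫ x, f x ∂μ := by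
    rw [← hlaw 0, integral_map (hX 0) (hlaw 0 ▸ hf.aestronglyMeasurable)]; rfl
  have := strong_law_ae_real (fun i => f ∘ X i) hint hpair hident
  rwa [hmean] at this

noncomputable def intervalFreq (x : ℕ → ℝ) (c d : ℝ) (n : ℕ) : ℝ :=
  (((range n).filter fun k => x k ∈ Set.Icc c d).card : ℝ) / n

section intervalFreq

variable {x : ℕ → ℝ} {c d c' d' : ℝ} {n : ℕ}

theorem intervalFreq_eq_sum_indicator :
    intervalFreq x c d n = (∑ i ∈ range n, (Set.Icc c d).indicator 1 (x i)) / n := by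
  simp only [intervalFreq, card_filter, Nat.cast_sum, Set.indicator_apply, Nat.cast_ite,
    Nat.cast_one, Nat.cast_zero, Pi.one_apply]

theorem intervalFreq_nonneg : 0 ≤ intervalFreq x c d n := by
  unfold intervalFreq; positivity

theorem intervalFreq_mono (hc : c' ≤ c) (hd : d ≤ d') :
    intervalFreq x c d n ≤ intervalFreq x c' d' n := by
  unfold intervalFreq
  gcongr

end intervalFreq

theorem exists_rat_nonneg_le_of_sub_lt {c δ : ℝ} (hc : 0 ≤ c) (hδ : 0 < δ) :
    ∃ q : ℚ, 0 ≤ (q : ℝ) ∧ c - δ < q ∧ (q : ℝ) ≤ c := by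
  obtain ⟨q, hq, hqc⟩ := exists_rat_btwn (sub_lt_self c hδ)
  exact ⟨max q 0, by push_cast; exact le_max_right _ _, by push_cast; exact lt_max_of_lt_left hq,
    by push_cast; exact max_le hqc.le hc⟩

theorem exists_rat_le_one_ge_of_lt_add {d δ : ℝ} (hd : d ≤ 1) (hδ : 0 < δ) :
    ∃ r : ℚ, (r : ℝ) ≤ 1 ∧ d ≤ r ∧ (r : ℝ) < d + δ := by
  obtain ⟨r, hdr, hr⟩ := exists_rat_btwn (lt_add_of_pos_right d hδ)
  exact ⟨min r 1, by push_cast; exact min_le_right _ _, by push_cast; exact le_min hdr.le hd,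
    by push_cast; exact min_lt_of_left_lt hr⟩

theorem isUniformlyDistributed_of_forall_rat {x : ℕ → ℝ}
    (h : ∀ q r : ℚ, 0 ≤ (q : ℝ) → (q : ℝ) ≤ r → (r : ℝ) ≤ 1 →
      Tendsto (intervalFreq x q r) atTop (𝓝 (r - q))) :
    IsUniformlyDistributed x := by
  intro c d hc hcd hd
  refine tendsto_order.2 ⟨fun b hb => ?_, fun b hb => ?_⟩
  · rcases lt_or_ge b 0 with hb0 | hb0
    · exact Eventually.of_forall fun n => hb0.trans_le intervalFreq_nonneg
    obtain ⟨q, hcq, hq⟩ := exists_rat_btwn (lt_add_of_pos_right c (half_pos (sub_pos.2 hb)))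
    obtain ⟨r, hr, hrd⟩ := exists_rat_btwn (sub_lt_self d (half_pos (sub_pos.2 hb)))
    have hbr : b < r - q := by linarith
    filter_upwards [(h q r (by linarith) (by linarith) (by linarith)).eventually
      (eventually_gt_nhds hbr)] with n hn
    exact hn.trans_le (intervalFreq_mono hcq.le hrd.le)
  · have hδ : 0 < (b - (d - c)) / 2 := by linarith
    obtain ⟨q, hq0, hq, hqc⟩ := exists_rat_nonneg_le_of_sub_lt hc hδ
    obtain ⟨r, hr1, hdr, hr⟩ := exists_rat_le_one_ge_of_lt_add hd hδ
    have hbr : (r : ℝ) - q < b := by linarith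
    filter_upwards [(h q r hq0 (by linarith) hr1).eventually (eventually_lt_nhds hbr)] with n hn
    exact (intervalFreq_mono hqc hdr).trans_lt hn

theorem setIntegral_Ioo_indicator_Icc {c d : ℝ} (hc : 0 ≤ c) (hcd : c ≤ d) (hd : d ≤ 1) :
    ∫ x in Set.Ioo (0 : ℝ) 1, (Set.Icc c d).indicator 1 x = d - c := by
  rw [Measure.restrict_congr_set Ioo_ae_eq_Icc, integral_indicator_one measurableSet_Icc,
    measureReal_restrict_apply measurableSet_Icc,
    Set.inter_eq_left.2 (Set.Icc_subset_Icc hc hd), Real.volume_real_Icc_of_le hcd]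

theorem ae_isUniformlyDistributed {Ω : Type*} [MeasurableSpace Ω] {P : Measure Ω}
    {X : ℕ → Ω → ℝ} (hX : ∀ i, AEMeasurable (X i) P) (hindep : iIndepFun X P)
    (hlaw : ∀ i, P.map (X i) = volume.restrict (Set.Ioo 0 1)) :
    ∀ᵐ ω ∂P, IsUniformlyDistributed fun k => X k ω := by
  have h_rat : ∀ q r : ℚ, 0 ≤ (q : ℝ) → (q : ℝ) ≤ r → (r : ℝ) ≤ 1 →
      ∀ᵐ ω ∂P, Tendsto (intervalFreq (fun k => X k ω) q r) atTop (𝓝 (r - q)) := by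
    intro q r hq hqr hr
    have hind : Integrable ((Set.Icc (q : ℝ) r).indicator (1 : ℝ → ℝ))
        (volume.restrict (Set.Ioo 0 1)) :=
      (integrable_const (1 : ℝ)).indicator measurableSet_Icc
    have hslln := strong_law_ae_comp hX hindep hlaw hind
    rw [setIntegral_Ioo_indicator_Icc hq hqr hr] at hslln
    filter_upwards [hslln] with ω hω
    exact hω.congr fun n => intervalFreq_eq_sum_indicator.symm
  have h_all : ∀ᵐ ω ∂P, ∀ q r : ℚ, 0 ≤ (q : ℝ) → (q : ℝ) ≤ r → (r : ℝ) ≤ 1 →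
      Tendsto (intervalFreq (fun k => X k ω) q r) atTop (𝓝 (r - q)) := by
    simpa only [ae_all_iff, eventually_imp_distrib_left] using h_rat
  filter_upwards [h_all] with ω hω using isUniformlyDistributed_of_forall_rat hω

theorem ae_four_conditions_general
    (Ω : Type*) [MeasurableSpace Ω] (P : Measure Ω)
    (X : ℕ → Ω → ℝ) (hmeas : ∀ k, Measurable (X k))
    (hindep : ProbabilityTheory.iIndepFun X P)
    (hunif : ∀ k, Measure.map (X k) P = volume.restrict (Set.Ioo 0 1))
    (f : ℝ → ℝ) (hf_int : IntegrableOn f (Set.Ioo 0 1)) :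
    ∀ᵐ ω ∂P,
      Tendsto (fun n : ℕ => f (X n ω) / n) atTop (nhds 0) ∧
      (∃ L : ℝ, Tendsto (fun N : ℕ => (N : ℝ)⁻¹ * ∑ k ∈ Finset.Icc 1 N, f (X k ω))
          atTop (nhds L)) ∧
      Tendsto (fun N : ℕ => (N : ℝ)⁻¹ * ∑ k ∈ Finset.Icc 1 N, f (X k ω))
        atTop (nhds (∫ x in Set.Ioo (0:ℝ) 1, f x)) ∧
      IsUniformlyDistributed (fun k => X k ω) := by
  have hX : ∀ k, AEMeasurable (X k) P := fun k => (hmeas k).aemeasurable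
  filter_upwards [strong_law_ae_comp hX hindep hunif hf_int,
    ae_isUniformlyDistributed hX hindep hunif] with ω hslln hud
  have hmean := tendsto_inv_mul_sum_Icc_of_tendsto_cesaro hslln
  exact ⟨tendsto_div_natCast_of_tendsto_cesaro hslln, ⟨_, hmean⟩, hmean, hud⟩

/-- Theorem 3.3: almost every sequence `(x_k) ∈ (0,1)^∞` simultaneously satisfies:
(1) `f(x_n)/n → 0`; (2) `lim_N (1/N)∑_{k=1}^N f(x_k)` exists;
(3) this limit equals `∫_{(0,1)} f`; (4) `(x_k)` is uniformly distributed in `(0,1)`. -/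
theorem ae_four_conditions
    (Ω : Type*) [MeasurableSpace Ω] (P : Measure Ω) [IsProbabilityMeasure P]
    (X : ℕ → Ω → ℝ) (hmeas : ∀ k, Measurable (X k))
    (hindep : ProbabilityTheory.iIndepFun X P)
    (hunif : ∀ k, Measure.map (X k) P = volume.restrict (Set.Ioo 0 1))
    (f : ℝ → ℝ) (hf_int : IntegrableOn f (Set.Ioo 0 1)) :
    ∀ᵐ ω ∂P,
      Tendsto (fun n : ℕ => f (X n ω) / n) atTop (nhds 0) ∧
      (∃ L : ℝ, Tendsto (fun N : ℕ => (N : ℝ)⁻¹ * ∑ k ∈ Finset.Icc 1 N, f (X k ω))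
          atTop (nhds L)) ∧
      Tendsto (fun N : ℕ => (N : ℝ)⁻¹ * ∑ k ∈ Finset.Icc 1 N, f (X k ω))
        atTop (nhds (∫ x in Set.Ioo (0:ℝ) 1, f x)) ∧
      IsUniformlyDistributed (fun k => X k ω) :=
  ae_four_conditions_general Ω P X hmeas hindep hunif f hf_int
end

section
/- For every irrational α, the sequence ({nα})_{n∈ℕ} of fractional parts is uniformly distributed in (0,1). -/
/-!
Weyl's criterion: along the orbit `k • a` of a point of infinite order on the circle, the
averages of every continuous function converge to its integral. For a character `e_m` with
`m ≠ 0` the averages are geometric sums with ratio `e_m(a) ≠ 1`, hence `O(1/n)`; trigonometric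
polynomials are dense in `C(𝕋, ℂ)` and the averages are `1`-Lipschitz in the sup norm, so the
convergence extends to all continuous functions. The proportion of points in `[c, d]` is then
squeezed by averages of continuous trapezoids: from below by one supported in `(c, d)`, from
above by `1` minus trapezoids supported in `(0, c)` and `(d, 1)`, which works because the
points `{kα}` lie in `[0, 1)`.
-/

open Filter

open Topology MeasureTheory Set

section BirkhoffAverage

variable {𝕜 E : Type*} [RCLike 𝕜] [NormedAddCommGroup E] [NormedSpace 𝕜 E]

theorem norm_birkhoffAverage_le {α : Type*} {f : α → α} {g : α → E} {C : ℝ} (hC : 0 ≤ C)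
    (hg : ∀ y, ‖g y‖ ≤ C) (n : ℕ) (x : α) : ‖birkhoffAverage 𝕜 f g n x‖ ≤ C := by
  rcases eq_or_ne n 0 with rfl | hn
  · simpa using hC
  have hsum : ‖birkhoffSum f g n x‖ ≤ n * C := by
    simpa [birkhoffSum] using norm_sum_le_of_le (Finset.range n) fun k _ => hg (f^[k] x)
  rw [birkhoffAverage, norm_smul, norm_inv, RCLike.norm_natCast]
  calc (n : ℝ)⁻¹ * ‖birkhoffSum f g n x‖ ≤ (n : ℝ)⁻¹ * (n * C) := by gcongr
    _ = C := by field_simp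

variable {X : Type*} [TopologicalSpace X] [CompactSpace X]

theorem dist_birkhoffAverage_le_dist (f : X → X) (g g' : C(X, E)) (n : ℕ) (x : X) :
    dist (birkhoffAverage 𝕜 f g n x) (birkhoffAverage 𝕜 f g' n x) ≤ dist g g' := by
  have hsub : birkhoffAverage 𝕜 f g n x - birkhoffAverage 𝕜 f g' n x =
      birkhoffAverage 𝕜 f ⇑(g - g') n x := by
    simp [birkhoffAverage_sub]
  rw [dist_eq_norm, hsub]
  exact norm_birkhoffAverage_le dist_nonneg
    (fun y => dist_eq_norm (g y) (g' y) ▸ ContinuousMap.dist_apply_le_dist y) n x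

variable [MeasurableSpace X] [OpensMeasurableSpace X]

theorem ContinuousMap.integrable (g : C(X, E)) (μ : Measure X) [IsFiniteMeasure μ] :
    Integrable g μ :=
  g.continuous.integrable_of_hasCompactSupport (.of_compactSpace _)

variable [NormedSpace ℝ E]

theorem dist_integral_le_dist (μ : Measure X) [IsProbabilityMeasure μ] (g g' : C(X, E)) :
    dist (∫ y, g y ∂μ) (∫ y, g' y ∂μ) ≤ dist g g' := by
  rw [dist_eq_norm, ← integral_sub (g.integrable μ) (g'.integrable μ)]
  simpa using norm_integral_le_of_norm_le_const (μ := μ)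
    (Eventually.of_forall fun y => dist_eq_norm (g y) (g' y) ▸ ContinuousMap.dist_apply_le_dist y)

theorem isClosed_setOfPred_tendsto_birkhoffAverage_integral (f : X → X) (μ : Measure X)
    [IsProbabilityMeasure μ] (x : X) :
    IsClosed {g : C(X, E) | Tendsto (birkhoffAverage 𝕜 f g · x) atTop (𝓝 (∫ y, g y ∂μ))} :=
  have hequi := LipschitzWith.uniformEquicontinuous _ 1 fun n =>
    LipschitzWith.of_dist_le_mul (K := 1) fun g g' => by
      simpa using dist_birkhoffAverage_le_dist (𝕜 := 𝕜) f g g' n x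
  have hint := LipschitzWith.of_dist_le_mul (K := 1) fun g g' => by
    simpa using dist_integral_le_dist (E := E) μ g g'
  hequi.equicontinuous.isClosed_setOfPred_tendsto hint.continuous

theorem tendsto_birkhoffAverage_integral_of_dense_span [CompleteSpace E] [SMulCommClass ℝ 𝕜 E]
    {f : X → X} {μ : Measure X} [IsProbabilityMeasure μ] {x : X} {s : Set C(X, E)}
    (hs : (Submodule.span 𝕜 s).topologicalClosure = ⊤)
    (h : ∀ g ∈ s, Tendsto (birkhoffAverage 𝕜 f g · x) atTop (𝓝 (∫ y, g y ∂μ))) (g : C(X, E)) :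
    Tendsto (birkhoffAverage 𝕜 f g · x) atTop (𝓝 (∫ y, g y ∂μ)) := by
  have hspan : ∀ φ ∈ Submodule.span 𝕜 s,
      Tendsto (birkhoffAverage 𝕜 f φ · x) atTop (𝓝 (∫ y, φ y ∂μ)) := by
    intro φ hφ
    induction hφ using Submodule.span_induction with
    | mem φ hφ => exact h φ hφ
    | zero => simp [birkhoffAverage, birkhoffSum]
    | add φ ψ _ _ hφ hψ =>
      simpa [birkhoffAverage_add, integral_add (φ.integrable μ) (ψ.integrable μ)]
        using hφ.add hψ
    | smul c φ _ hφ =>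
      simpa [birkhoffAverage, birkhoffSum, ← Finset.smul_sum, smul_comm _ c, integral_smul]
        using hφ.const_smul c
  have hclosure :=
    (isClosed_setOfPred_tendsto_birkhoffAverage_integral f μ x).closure_subset_iff.2 hspan
  rw [← Submodule.topologicalClosure_coe, hs] at hclosure
  exact hclosure trivial

end BirkhoffAverage

namespace AddCircle

variable {T : ℝ}

theorem birkhoffSum_fourier (a x : AddCircle T) (m : ℤ) (n : ℕ) :
    birkhoffSum (a + ·) (fourier m) n x = fourier m x * ∑ k ∈ Finset.range n, fourier m a ^ k := by
  simp only [birkhoffSum, add_left_iterate_apply, Finset.mul_sum, fourier_apply, smul_add,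
    smul_comm m, toCircle_add, toCircle_nsmul, Circle.coe_mul, Circle.coe_pow]
  exact Finset.sum_congr rfl fun k _ => mul_comm _ _

theorem norm_birkhoffSum_fourier_le {a : AddCircle T} {m : ℤ} (hm : fourier m a ≠ 1) (n : ℕ)
    (x : AddCircle T) : ‖birkhoffSum (a + ·) (fourier m) n x‖ ≤ 2 / ‖fourier m a - 1‖ := by
  have norm_fourier (y : AddCircle T) : ‖fourier m y‖ = 1 := Circle.norm_coe _
  rw [birkhoffSum_fourier, geom_sum_eq hm, norm_mul, norm_div, norm_fourier, one_mul]
  gcongr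
  calc ‖fourier m a ^ n - 1‖ ≤ ‖fourier m a ^ n‖ + ‖(1 : ℂ)‖ := norm_sub_le _ _
    _ = 2 := by rw [norm_pow, norm_fourier]; norm_num

variable [hT : Fact (0 < T)] {a : AddCircle T}

theorem fourier_apply_ne_one (ha : ¬IsOfFinAddOrder a) {m : ℤ} (hm : m ≠ 0) : fourier m a ≠ 1 := by
  intro h
  refine ha (isOfFinAddOrder_iff_zsmul_eq_zero.2 ⟨m, hm, injective_toCircle hT.out.ne' ?_⟩)
  rw [toCircle_zero]
  exact Circle.ext (by simpa [fourier_apply] using h)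

theorem integral_fourier_of_ne_zero {m : ℤ} (hm : m ≠ 0) :
    ∫ y, fourier (T := T) m y ∂haarAddCircle = 0 :=
  integral_eq_zero_of_add_right_eq_neg (fourier_add_half_inv_index hm hT.out)

theorem tendsto_birkhoffAverage_fourier (ha : ¬IsOfFinAddOrder a) (m : ℤ) (x : AddCircle T) :
    Tendsto (birkhoffAverage ℂ (a + ·) (fourier m) · x) atTop
      (𝓝 (∫ y, fourier m y ∂haarAddCircle (T := T))) := by
  rcases eq_or_ne m 0 with rfl | hm
  · have hconst : fourier (T := T) 0 ∘ (a + ·) = fourier 0 := by ext; simp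
    refine tendsto_const_nhds.congr' ((eventually_ne_atTop 0).mono fun n hn => ?_)
    simp [birkhoffAverage_of_comp_eq ℂ hconst (Nat.cast_ne_zero.2 hn)]
  rw [integral_fourier_of_ne_zero hm]
  refine squeeze_zero_norm (fun n => ?_)
    (tendsto_const_div_atTop_nhds_zero_nat (2 / ‖fourier m a - 1‖))
  rw [birkhoffAverage, norm_smul, norm_inv, Complex.norm_natCast, inv_mul_eq_div]
  gcongr
  exact norm_birkhoffSum_fourier_le (fourier_apply_ne_one ha hm) n x

theorem tendsto_birkhoffAverage_integral (ha : ¬IsOfFinAddOrder a) (g : C(AddCircle T, ℂ))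
    (x : AddCircle T) :
    Tendsto (birkhoffAverage ℂ (a + ·) g · x) atTop (𝓝 (∫ y, g y ∂haarAddCircle)) :=
  tendsto_birkhoffAverage_integral_of_dense_span span_fourier_closure_eq_top
    (by rintro _ ⟨m, rfl⟩; exact tendsto_birkhoffAverage_fourier ha m x) g

end AddCircle

theorem UnitAddCircle.liftIco_coe_apply {B : Type*} (f : ℝ → B) (t : ℝ) :
    AddCircle.liftIco 1 0 f (t : UnitAddCircle) = f (Int.fract t) := by
  simp [AddCircle.liftIco, AddCircle.equivIco, toIcoMod_zero_one]

theorem UnitAddCircle.integral_liftIco {E : Type*} [NormedAddCommGroup E] [NormedSpace ℝ E]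
    {f : ℝ → E} (h01 : f 0 = f 1) :
    ∫ y, AddCircle.liftIco 1 0 f y ∂AddCircle.haarAddCircle = ∫ t in (0 : ℝ)..1, f t := by
  have hvol : (volume : Measure UnitAddCircle) = AddCircle.haarAddCircle := by
    simp [AddCircle.volume_eq_smul_haarAddCircle]
  rw [← AddCircle.liftIoc_eq_liftIco (by simpa using h01), ← hvol,
    ← UnitAddCircle.integral_preimage 0, zero_add, intervalIntegral.integral_of_le zero_le_one]
  exact setIntegral_congr_fun measurableSet_Ioc fun t ht => AddCircle.liftIoc_zero_coe_apply ht

theorem Irrational.tendsto_average_fract_mul {α : ℝ} (hα : Irrational α) {f : ℝ → ℝ}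
    (hf : Continuous f) (h01 : f 0 = f 1) :
    Tendsto (fun n : ℕ => (∑ k ∈ Finset.range n, f (Int.fract (k * α))) / n) atTop
      (𝓝 (∫ t in (0 : ℝ)..1, f t)) := by
  have hα' : ¬IsOfFinAddOrder (α : UnitAddCircle) := by
    simpa [AddCircle.isOfFinAddOrder_iff_exists_rat_eq_div, Irrational] using hα
  let F : C(UnitAddCircle, ℂ) :=
    ⟨AddCircle.liftIco 1 0 (fun t => (f t : ℂ)),
      AddCircle.liftIco_zero_continuous (by simp [h01]) (by fun_prop)⟩
  have horbit (k : ℕ) : ((α : UnitAddCircle) + ·)^[k] 0 = ((k * α : ℝ) : UnitAddCircle) := by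
    rw [add_left_iterate_apply, add_zero, ← AddCircle.coe_nsmul, nsmul_eq_mul]
  have hF (n : ℕ) : birkhoffAverage ℂ ((α : UnitAddCircle) + ·) F n 0 =
      ((∑ k ∈ Finset.range n, f (Int.fract (k * α))) / n : ℝ) := by
    simp only [birkhoffAverage, birkhoffSum, horbit, F, ContinuousMap.coe_mk,
      UnitAddCircle.liftIco_coe_apply]
    push_cast
    rw [smul_eq_mul, div_eq_inv_mul]
  have hint : ∫ y, F y ∂AddCircle.haarAddCircle = ((∫ t in (0 : ℝ)..1, f t : ℝ) : ℂ) := by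
    rw [← intervalIntegral.integral_ofReal]
    exact UnitAddCircle.integral_liftIco (f := fun t => (f t : ℂ)) (by rw [h01])
  have := AddCircle.tendsto_birkhoffAverage_integral hα' F 0
  simp only [hF, hint] at this
  exact tendsto_ofReal_iff.1 this

noncomputable def trapezoid (a b δ t : ℝ) : ℝ := min 1 (max 0 (min (t - a) (b - t)) / δ)

theorem continuous_trapezoid (a b δ : ℝ) : Continuous (trapezoid a b δ) := by
  unfold trapezoid
  fun_prop

theorem trapezoid_nonneg {δ : ℝ} (hδ : 0 ≤ δ) (a b t : ℝ) : 0 ≤ trapezoid a b δ t :=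
  le_min zero_le_one (div_nonneg (le_max_left _ _) hδ)

theorem trapezoid_of_notMem {a b t : ℝ} (δ : ℝ) (ht : t ∉ Ioo a b) : trapezoid a b δ t = 0 := by
  have : min (t - a) (b - t) ≤ 0 := by
    rw [mem_Ioo, not_and_or, not_lt, not_lt] at ht
    rcases ht with ht | ht
    · exact (min_le_left _ _).trans (by linarith)
    · exact (min_le_right _ _).trans (by linarith)
  simp [trapezoid, max_eq_left this]

theorem trapezoid_eq_one {a b δ t : ℝ} (hδ : 0 < δ) (hat : a + δ ≤ t) (htb : t ≤ b - δ) :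
    trapezoid a b δ t = 1 := by
  have : δ ≤ max 0 (min (t - a) (b - t)) := le_max_of_le_right (le_min (by linarith) (by linarith))
  exact min_eq_left ((one_le_div hδ).2 this)

theorem trapezoid_le_ite {δ : ℝ} (a b t : ℝ) :
    trapezoid a b δ t ≤ if t ∈ Ioo a b then 1 else 0 := by
  split_ifs with ht
  · exact min_le_left _ _
  · exact (trapezoid_of_notMem δ ht).le

theorem le_integral_trapezoid {a b δ : ℝ} (ha : 0 ≤ a) (hb : b ≤ 1) (hδ : 0 < δ) :
    b - a - 2 * δ ≤ ∫ t in (0 : ℝ)..1, trapezoid a b δ t := by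
  rcases le_or_gt (b - a) (2 * δ) with hsmall | hlarge
  · linarith [intervalIntegral.integral_nonneg (μ := volume) zero_le_one
      fun t _ => trapezoid_nonneg hδ.le a b t]
  calc b - a - 2 * δ = ∫ t in (a + δ)..(b - δ), (1 : ℝ) := by simp; ring
    _ = ∫ t in (a + δ)..(b - δ), trapezoid a b δ t :=
      intervalIntegral.integral_congr fun t ht => by
        rw [uIcc_of_le (by linarith)] at ht
        exact (trapezoid_eq_one hδ ht.1 ht.2).symm
    _ ≤ ∫ t in (0 : ℝ)..1, trapezoid a b δ t :=
      intervalIntegral.integral_mono_interval (by linarith) (by linarith) (by linarith)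
        (Eventually.of_forall fun t => trapezoid_nonneg hδ.le a b t)
        ((continuous_trapezoid a b δ).intervalIntegrable 0 1)

theorem eventually_lt_card_filter_mem_Ioo_div {x : ℕ → ℝ}
    (hx : ∀ f : ℝ → ℝ, Continuous f → f 0 = f 1 →
      Tendsto (fun n : ℕ => (∑ k ∈ Finset.range n, f (x k)) / n) atTop
        (𝓝 (∫ t in (0 : ℝ)..1, f t)))
    {a b r : ℝ} (ha : 0 ≤ a) (hb : b ≤ 1) (hr : r < b - a) :
    ∀ᶠ n : ℕ in atTop, r < ((Finset.range n).filter fun k => x k ∈ Ioo a b).card / (n : ℝ) := by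
  set δ := (b - a - r) / 4 with hδ_def
  have hδ : 0 < δ := by linarith
  have hint : r < ∫ t in (0 : ℝ)..1, trapezoid a b δ t := by
    linarith [le_integral_trapezoid ha hb hδ]
  have hends : trapezoid a b δ 0 = trapezoid a b δ 1 := by
    rw [trapezoid_of_notMem δ fun h => by linarith [h.1],
      trapezoid_of_notMem δ fun h => by linarith [h.2]]
  filter_upwards [(hx _ (continuous_trapezoid a b δ) hends).eventually (lt_mem_nhds hint)]
    with n hn
  refine hn.trans_le (div_le_div_of_nonneg_right ?_ n.cast_nonneg)
  rw [Finset.natCast_card_filter]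
  exact Finset.sum_le_sum fun k _ => trapezoid_le_ite a b (x k)

theorem card_filter_mem_Icc_add_Ioo_add_Ioo_le {x : ℕ → ℝ} (hx01 : ∀ k, x k ∈ Ico 0 1)
    {c d : ℝ} (hcd : c ≤ d) (n : ℕ) :
    (((Finset.range n).filter fun k => x k ∈ Icc c d).card : ℝ) +
      ((Finset.range n).filter fun k => x k ∈ Ioo 0 c).card +
      ((Finset.range n).filter fun k => x k ∈ Ioo d 1).card ≤ n := by
  simp only [Finset.natCast_card_filter, ← Finset.sum_add_distrib]
  refine (Finset.sum_le_card_nsmul _ _ 1 fun k _ => ?_).trans (by simp)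
  have := hx01 k
  split_ifs <;> simp only [mem_Icc, mem_Ioo, mem_Ico] at * <;> linarith

theorem isUniformlyDistributed_of_tendsto_average {x : ℕ → ℝ} (hx01 : ∀ k, x k ∈ Ico 0 1)
    (hx : ∀ f : ℝ → ℝ, Continuous f → f 0 = f 1 →
      Tendsto (fun n : ℕ => (∑ k ∈ Finset.range n, f (x k)) / n) atTop
        (𝓝 (∫ t in (0 : ℝ)..1, f t))) :
    IsUniformlyDistributed x := by
  intro c d hc hcd hd
  refine tendsto_order.2 ⟨fun r hr => ?_, fun r hr => ?_⟩
  · filter_upwards [eventually_lt_card_filter_mem_Ioo_div hx hc hd hr] with n hn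
    refine hn.trans_le (div_le_div_of_nonneg_right ?_ n.cast_nonneg)
    exact_mod_cast Finset.card_le_card
      (Finset.monotone_filter_right _ fun _ _ h => Ioo_subset_Icc_self h)
  · set η := (r - (d - c)) / 2 with hη
    filter_upwards [eventually_lt_card_filter_mem_Ioo_div hx le_rfl (hcd.trans hd)
        (show c - η < c - 0 by linarith),
      eventually_lt_card_filter_mem_Ioo_div hx (hc.trans hcd) le_rfl
        (show 1 - d - η < 1 - d by linarith)] with n h0 h1
    have hle := div_le_div_of_nonneg_right
      (card_filter_mem_Icc_add_Ioo_add_Ioo_le hx01 hcd n) n.cast_nonneg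
    rw [add_div, add_div] at hle
    linarith [div_self_le_one (n : ℝ)]

/-- Weyl's equidistribution theorem: for irrational `α`, the sequence of fractional parts
`({nα})` is uniformly distributed in `(0,1)`. -/
theorem weyl_equidistribution (α : ℝ) (hα : Irrational α) :
    IsUniformlyDistributed fun n : ℕ => Int.fract ((n : ℝ) * α) :=
  isUniformlyDistributed_of_tendsto_average (fun _ => ⟨Int.fract_nonneg _, Int.fract_lt_one _⟩)
    fun _ hf h01 => hα.tendsto_average_fract_mul hf h01
end
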